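/- Fix a real k ≥ 1, θ > 0, an interval I of length 1/(3k) with midpoint p* ∈ [0,1], a time step t₀, and a horizon T. Let P⁺ = {p ∈ P ∩ I : Δ_p(t₀) ≥ 0} and define Δ̂(t) = Σ_{p∈P⁺} Δ_p(t). Suppose that Δ̂(t₀) ≥ θ/2 and that at every step t > t₀ at which the forecaster predicts a value in P⁺, the adversary's bit b(t) is drawn, conditionally on the history, from Bernoulli(q_t) with q_t ≥ p* + 1/(3k). Then for any (possibly random, adaptively chosen) stopping time T_act with t₀ ≤ T_act ≤ T, the probability that Δ̂(T_act) < θ/4 is at most T · exp(−θ/(12k)). (The symmetric statement holds with P⁻ = {p ∈ P ∩ I : Δ_p(t₀) < 0}, Δ̂(t) = Σ_{p∈P⁻} (−Δ_p(t)), and q_t ≤ p* − 1/(3k).) -/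

import Mathlib

open scoped Classical

/-- A transcript of play: the list of (prediction, bit) pairs so far, earliest first. -/
abbrev Transcript : Type := List (ℝ × Bool)

/-- `Δ h p` is the bias `m_p - n_p * p` of prediction value `p` in transcript `h`. -/
noncomputable def bias (h : Transcript) (p : ℝ) : ℝ :=
  ((h.filter fun x => decide (x.1 = p ∧ x.2 = true)).length : ℝ)
    - ((h.filter fun x => decide (x.1 = p)).length : ℝ) * p

/-- The calibration error of a transcript. -/
noncomputable def calErr (h : Transcript) : ℝ :=
  ∑ p ∈ (h.map Prod.fst).toFinset, |bias h p|

/-- Bernoulli distribution on `Bool` with parameter `p` (junk if `p > 1` or `p < 0`). -/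
noncomputable def bern (p : ℝ) : PMF Bool :=
  if h : ENNReal.ofReal p ≤ 1 then PMF.bernoulli (Real.toNNReal p) (ENNReal.coe_le_one_iff.mp h) else PMF.pure true

/-- Distribution over transcripts after `T` steps, where the forecaster samples a prediction
from `F h` and the adversary simultaneously samples a bit from `A h`. -/
noncomputable def playDist (F : Transcript → PMF ℝ) (A : Transcript → PMF Bool) :
    ℕ → PMF Transcript
  | 0 => PMF.pure []
  | T + 1 => (playDist F A T).bind fun h =>
      (F h).bind fun p => (A h).map fun b => h ++ [(p, b)]

/-- Expected calibration error after `T` steps. -/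
noncomputable def expCalErr (F : Transcript → PMF ℝ) (A : Transcript → PMF Bool) (T : ℕ) : ℝ :=
  ∑' h : Transcript, (playDist F A T h).toReal * calErr h

/-- Probability of an event under a PMF on transcripts. -/
noncomputable def prEvent (μ : PMF Transcript) (E : Transcript → Prop) : ℝ :=
  (∑' h : Transcript, if E h then μ h else 0).toReal

/-- maximum cumulative calibration error over all prefixes of a transcript. -/
noncomputable def maxCalErr (h : Transcript) : ℝ :=
  (Finset.range (h.length + 1)).sup' (by simp) fun t => calErr (h.take t)

/-- Play with an adversary that may stop early (`none`); second component records stopping. -/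
noncomputable def playStop (F : Transcript → PMF ℝ) (A : Transcript → PMF (Option Bool)) :
    ℕ → PMF (Transcript × Bool)
  | 0 => PMF.pure ([], false)
  | T + 1 => (playStop F A T).bind fun s =>
      if s.2 then PMF.pure s
      else (A s.1).bind fun ob =>
        match ob with
        | none => PMF.pure (s.1, true)
        | some b => (F s.1).map fun p => (s.1 ++ [(p, b)], false)

/-- Play for `n` more steps starting from the history `h₀`, where the bit at each step may
depend (conditionally on the history) on the current prediction. -/
noncomputable def playFromP (F : Transcript → PMF ℝ) (A : Transcript → ℝ → PMF Bool)
    (h₀ : Transcript) : ℕ → PMF Transcript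
  | 0 => PMF.pure h₀
  | n + 1 => (playFromP F A h₀ n).bind fun h =>
      (F h).bind fun p => (A h p).map fun b => h ++ [(p, b)]

open scoped ENNReal

section Aux

/-! ### Expectation machinery for PMFs -/

noncomputable def pexp {α : Type*} (μ : PMF α) (g : α → ℝ≥0∞) : ℝ≥0∞ := ∑' a, μ a * g a

lemma pexp_pure {α : Type*} (a : α) (g : α → ℝ≥0∞) : pexp (PMF.pure a) g = g a := by
  unfold pexp
  rw [tsum_eq_single a]
  · simp [PMF.pure_apply]
  · intro b hb; simp [PMF.pure_apply, hb]

lemma pexp_bind {α β : Type*} (μ : PMF α) (κ : α → PMF β) (g : β → ℝ≥0∞) :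
    pexp (μ.bind κ) g = pexp μ fun a => pexp (κ a) g := by
  unfold pexp
  simp only [PMF.bind_apply]
  calc ∑' b, (∑' a, μ a * κ a b) * g b
      = ∑' b, ∑' a, μ a * κ a b * g b := by
        congr 1; funext b; rw [← ENNReal.tsum_mul_right]
    _ = ∑' a, ∑' b, μ a * κ a b * g b := ENNReal.tsum_comm
    _ = ∑' a, μ a * ∑' b, κ a b * g b := by
        congr 1; funext a; simp_rw [mul_assoc]; rw [ENNReal.tsum_mul_left]

lemma pexp_map {α β : Type*} (μ : PMF α) (f : α → β) (g : β → ℝ≥0∞) :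
    pexp (μ.map f) g = pexp μ fun a => g (f a) := by
  unfold PMF.map
  rw [pexp_bind]
  simp [pexp_pure]

lemma pexp_const {α : Type*} (μ : PMF α) (c : ℝ≥0∞) : pexp μ (fun _ => c) = c := by
  unfold pexp
  rw [ENNReal.tsum_mul_right, PMF.tsum_coe, one_mul]

lemma pexp_congr {α : Type*} {μ : PMF α} {g g' : α → ℝ≥0∞}
    (h : ∀ a ∈ μ.support, g a = g' a) : pexp μ g = pexp μ g' := by
  unfold pexp
  apply tsum_congr
  intro a
  by_cases ha : a ∈ μ.support
  · rw [h a ha]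
  · simp only [PMF.mem_support_iff, not_not] at ha; simp [ha]

lemma pexp_mono {α : Type*} {μ : PMF α} {g g' : α → ℝ≥0∞}
    (h : ∀ a ∈ μ.support, g a ≤ g' a) : pexp μ g ≤ pexp μ g' := by
  unfold pexp
  apply ENNReal.tsum_le_tsum
  intro a
  by_cases ha : a ∈ μ.support
  · exact mul_le_mul_right (h a ha) _
  · simp only [PMF.mem_support_iff, not_not] at ha; simp [ha]

/-! ### Scalar inequalities -/

lemma exp_quad {x : ℝ} (hx : 0 ≤ x) : Real.exp (-x) ≤ 1 - x + x^2/2 := by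
  set f : ℝ → ℝ := fun z => 1 - z + z^2/2 - Real.exp (-z) with hf
  have H : ∀ z : ℝ, HasDerivAt f (-1 + z + Real.exp (-z)) z := by
    intro z
    have h1 : HasDerivAt (fun z : ℝ => Real.exp (-z)) (Real.exp (-z) * (-1)) z :=
      (Real.hasDerivAt_exp (-z)).comp z ((hasDerivAt_id z).neg)
    have h2 : HasDerivAt (fun z : ℝ => 1 - z + z^2/2) (-1 + z) z := by
      have : HasDerivAt (fun z : ℝ => z^2/2) (2 * z^(2-1) / 2) z := (hasDerivAt_pow 2 z).div_const 2
      exact (((hasDerivAt_const z (1:ℝ)).sub (hasDerivAt_id' z)).add this).congr_deriv (by norm_num)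
    have := h2.sub h1
    exact this.congr_deriv (by ring)
  have mono : MonotoneOn f (Set.Ici 0) := by
    apply monotoneOn_of_deriv_nonneg (convex_Ici 0)
    · exact (Continuous.continuousOn (by continuity))
    · intro y hy
      exact (H y).differentiableAt.differentiableWithinAt
    · intro y hy
      rw [(H y).deriv]
      simp only [Set.mem_Ioi, interior_Ici] at hy
      nlinarith [Real.add_one_le_exp (-y)]
  have h0 : f 0 ≤ f x := mono (Set.self_mem_Ici) hx hx
  simp only [hf] at h0
  norm_num at h0
  linarith

lemma step_scalar {lam p q : ℝ} (h0 : 0 < lam) (h2 : lam ≤ 2) (hq0 : 0 ≤ q)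
    (hpq : p + lam/2 ≤ q) (hp1 : p ≤ 1 - lam/2) :
    q * Real.exp (-(lam * (1 - p))) + (1 - q) * Real.exp (lam * p) ≤ 1 := by
  have e1 : Real.exp (-(lam * (1-p))) = Real.exp (lam * p) * Real.exp (-lam) := by
    rw [← Real.exp_add]; ring_nf
  rw [e1]
  have expand : q * (Real.exp (lam*p) * Real.exp (-lam)) + (1-q) * Real.exp (lam*p)
      = Real.exp (lam*p) * (1 - q * (1 - Real.exp (-lam))) := by ring
  rw [expand]
  have hbd : 1 - q * (1 - Real.exp (-lam)) ≤ Real.exp (- (q * (1 - Real.exp (-lam)))) := by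
    have := Real.add_one_le_exp (-(q * (1 - Real.exp (-lam))))
    linarith
  have hpos : (0:ℝ) < Real.exp (lam * p) := Real.exp_pos _
  calc Real.exp (lam*p) * (1 - q * (1 - Real.exp (-lam)))
      ≤ Real.exp (lam*p) * Real.exp (-(q * (1 - Real.exp (-lam)))) := by
        exact mul_le_mul_of_nonneg_left hbd hpos.le
    _ = Real.exp (lam*p - q * (1 - Real.exp (-lam))) := by rw [← Real.exp_add]; ring_nf
    _ ≤ Real.exp 0 := by
        apply Real.exp_le_exp.mpr
        have hq : lam - lam^2/2 ≤ 1 - Real.exp (-lam) := by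
          have := exp_quad h0.le
          linarith
        have h3 : q * (lam - lam^2/2) ≤ q * (1 - Real.exp (-lam)) :=
          mul_le_mul_of_nonneg_left hq hq0
        have h4 : 0 ≤ lam - lam^2/2 := by nlinarith
        have h5 : (p + lam/2) * (lam - lam^2/2) ≤ q * (lam - lam^2/2) :=
          mul_le_mul_of_nonneg_right hpq h4
        nlinarith [mul_nonneg (mul_nonneg h0.le h0.le) (by linarith : (0:ℝ) ≤ 1 - p - lam/2)]
    _ = 1 := Real.exp_zero

/-! ### Bias bookkeeping -/

lemma bias_append (h : Transcript) (x : ℝ × Bool) (r : ℝ) :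
    bias (h ++ [x]) r = bias h r + (if x.1 = r then (if x.2 then (1:ℝ) else 0) - r else 0) := by
  unfold bias
  rw [List.filter_append, List.filter_append, List.length_append, List.length_append]
  by_cases h1 : x.1 = r
  · by_cases h2 : x.2 = true
    · simp [List.filter, h1, h2]; ring
    · simp only [Bool.not_eq_true] at h2
      simp [List.filter, h1, h2]; ring
  · simp [List.filter, h1]

lemma sum_bias_append (S : Finset ℝ) (ε : ℝ) (h : Transcript) (x : ℝ × Bool) :
    ∑ p ∈ S, ε * bias (h ++ [x]) p
      = (∑ p ∈ S, ε * bias h p)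
        + (if x.1 ∈ S then ε * ((if x.2 then (1:ℝ) else 0) - x.1) else 0) := by
  simp only [bias_append, mul_add, Finset.sum_add_distrib]
  congr 1
  rw [← Finset.sum_ite_eq S x.1 (fun r => ε * ((if x.2 then (1:ℝ) else 0) - r))]
  apply Finset.sum_congr rfl
  intro r _
  by_cases h1 : x.1 = r <;> simp [h1]

lemma bern_pexp (q : ℝ) (hq0 : 0 ≤ q) (hq1 : q ≤ 1) (g : Bool → ℝ≥0∞) :
    pexp (bern q) g = ENNReal.ofReal q * g true + ENNReal.ofReal (1 - q) * g false := by
  have h1 : ENNReal.ofReal q ≤ 1 := by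
    rw [← ENNReal.ofReal_one]; exact ENNReal.ofReal_le_ofReal hq1
  have h2 : ENNReal.ofReal (1 - q) = 1 - ENNReal.ofReal q := by
    rw [ENNReal.ofReal_sub 1 hq0, ENNReal.ofReal_one]
  unfold bern pexp
  rw [dif_pos h1, tsum_bool]
  simp only [PMF.bernoulli_apply, Bool.cond_false, Bool.cond_true]
  simp only [ENNReal.ofReal] at *
  rw [h2]
  rw [ENNReal.coe_sub, ENNReal.coe_one]
  ring

lemma support_playFromP (F : Transcript → PMF ℝ) (A : Transcript → ℝ → PMF Bool)
    (h₀ : Transcript) : ∀ n h, h ∈ (playFromP F A h₀ n).support →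
      ∃ l : Transcript, h = h₀ ++ l ∧ l.length = n := by
  intro n
  induction n with
  | zero =>
    intro h hh
    simp only [playFromP, PMF.support_pure, Set.mem_singleton_iff] at hh
    exact ⟨[], by simp [hh]⟩
  | succ n ih =>
    intro h hh
    simp only [playFromP, PMF.mem_support_bind_iff, PMF.mem_support_map_iff] at hh
    obtain ⟨h', hh', p, hp, b, hb, rfl⟩ := hh
    obtain ⟨l, rfl, hl⟩ := ih h' hh'
    exact ⟨l ++ [(p, b)], by simp [hl]⟩

end Aux

theorem main_bound (lam θ : ℝ) (hθ : 0 < θ) (hlam : 0 < lam)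
    (t₀ T : ℕ) (ht₀ : t₀ ≤ T) (h₀ : Transcript) (hlen : h₀.length = t₀)
    (S : Finset ℝ) (ε : ℝ)
    (hinit : θ / 2 ≤ ∑ p ∈ S, ε * bias h₀ p)
    (F : Transcript → PMF ℝ) (A : Transcript → ℝ → PMF Bool)
    (hA : ∀ (h : Transcript) (p : ℝ), t₀ ≤ h.length → p ∈ S →
      ∃ q : ℝ, 0 ≤ q ∧ q ≤ 1 ∧ A h p = bern q ∧
        q * Real.exp (-(lam * (ε * ((1:ℝ) - p)))) +
          (1 - q) * Real.exp (-(lam * (ε * ((0:ℝ) - p)))) ≤ 1)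
    (τ : Transcript → ℕ) (hτ : ∀ h, t₀ ≤ τ h ∧ τ h ≤ T) :
    prEvent (playFromP F A h₀ (T - t₀))
        (fun h => ∑ p ∈ S, ε * bias (h.take (τ h)) p < θ / 4)
      ≤ T * Real.exp (-(lam * θ / 4)) := by
  set D : Transcript → ℝ := fun h => ∑ p ∈ S, ε * bias h p with hD
  set Z : Transcript → ℝ≥0∞ := fun h => ENNReal.ofReal (Real.exp (-(lam * D h))) with hZ
  set μ : ℕ → PMF Transcript := playFromP F A h₀ with hμ
  -- length of histories in the support
  have hsup : ∀ n h, h ∈ (μ n).support → h.length = t₀ + n ∧ h.take t₀ = h₀ := by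
    intro n h hh
    obtain ⟨l, rfl, hl⟩ := support_playFromP F A h₀ n h hh
    constructor
    · simp [hlen, hl]
    · exact List.take_left' hlen
  -- the one-step supermartingale bound
  have onestep : ∀ h : Transcript, t₀ ≤ h.length →
      (pexp (F h) fun p => pexp (A h p) fun b => Z (h ++ [(p, b)])) ≤ Z h := by
    intro h hhl
    have : (pexp (F h) fun p => pexp (A h p) fun b => Z (h ++ [(p, b)]))
        ≤ pexp (F h) fun _ => Z h := by
      apply pexp_mono
      intro p _
      by_cases hp : p ∈ S
      · obtain ⟨q, hq0, hq1, hAq, hineq⟩ := hA h p hhl hp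
        rw [hAq, bern_pexp q hq0 hq1]
        have hZeq : ∀ b : Bool, Z (h ++ [(p, b)])
            = ENNReal.ofReal (Real.exp (-(lam * D h))
                * Real.exp (-(lam * (ε * ((if b then (1:ℝ) else 0) - p))))) := by
          intro b
          show ENNReal.ofReal (Real.exp (-(lam * D (h ++ [(p, b)])))) = _
          rw [show D (h ++ [(p, b)]) = D h + ε * ((if b then (1:ℝ) else 0) - p) by
            simp only [hD]; rw [sum_bias_append S ε h (p, b)]; simp [hp]]
          rw [← Real.exp_add]
          ring_nf
        rw [hZeq true, hZeq false]
        simp only [if_pos trivial]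
        rw [← ENNReal.ofReal_mul hq0, ← ENNReal.ofReal_mul (by linarith : (0:ℝ) ≤ 1 - q),
          ← ENNReal.ofReal_add (mul_nonneg hq0 (by positivity)) (mul_nonneg (by linarith) (by positivity))]
        show _ ≤ Z h
        rw [hZ]
        apply ENNReal.ofReal_le_ofReal
        have hEnn : (0:ℝ) ≤ Real.exp (-(lam * D h)) := (Real.exp_pos _).le
        calc q * (Real.exp (-(lam * D h)) * Real.exp (-(lam * (ε * ((1:ℝ) - p)))))
              + (1 - q) * (Real.exp (-(lam * D h)) * Real.exp (-(lam * (ε * ((0:ℝ) - p)))))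
            = Real.exp (-(lam * D h))
              * (q * Real.exp (-(lam * (ε * ((1:ℝ) - p))))
                + (1 - q) * Real.exp (-(lam * (ε * ((0:ℝ) - p))))) := by ring
          _ ≤ Real.exp (-(lam * D h)) * 1 := mul_le_mul_of_nonneg_left hineq hEnn
          _ = Real.exp (-(lam * D h)) := mul_one _
      · have hZeq : ∀ b : Bool, Z (h ++ [(p, b)]) = Z h := by
          intro b
          show ENNReal.ofReal (Real.exp (-(lam * D (h ++ [(p, b)])))) = _
          rw [show D (h ++ [(p, b)]) = D h by
            simp only [hD]; rw [sum_bias_append S ε h (p, b)]; simp [hp]]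
        simp only [hZeq]
        rw [pexp_const]
    calc _ ≤ pexp (F h) fun _ => Z h := this
      _ = Z h := pexp_const _ _
  -- supermartingale property
  have mart : ∀ n, pexp (μ n) Z ≤ Z h₀ := by
    intro n
    induction n with
    | zero => rw [hμ]; show pexp (PMF.pure h₀) Z ≤ Z h₀; rw [pexp_pure]
    | succ n ih =>
      have hrec : μ (n + 1) = (μ n).bind fun h =>
          (F h).bind fun p => (A h p).map fun b => h ++ [(p, b)] := rfl
      rw [hrec, pexp_bind]
      refine le_trans (pexp_mono ?_) ih
      intro h hh
      rw [pexp_bind]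
      simp only [pexp_map]
      exact onestep h (by rw [(hsup n h hh).1]; omega)
  -- projection property
  have proj : ∀ (g : Transcript → ℝ≥0∞) (m n : ℕ), m ≤ n →
      pexp (μ n) (fun h => g (h.take (t₀ + m))) = pexp (μ m) g := by
    intro g m n hmn
    induction n, hmn using Nat.le_induction with
    | base =>
      apply pexp_congr
      intro h hh
      have := (hsup m h hh).1
      rw [← this, List.take_length]
    | succ n hmn ih =>
      have hrec : μ (n + 1) = (μ n).bind fun h =>
          (F h).bind fun p => (A h p).map fun b => h ++ [(p, b)] := rfl
      rw [hrec, pexp_bind, ← ih]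
      apply pexp_congr
      intro h hh
      rw [pexp_bind]
      simp only [pexp_map]
      have hlen' : t₀ + m ≤ h.length := by rw [(hsup n h hh).1]; omega
      have htake : ∀ x : ℝ × Bool, (h ++ [x]).take (t₀ + m) = h.take (t₀ + m) := by
        intro x
        exact List.take_append_of_le_length hlen'
      simp only [htake]
      rw [pexp_congr (fun p _ => pexp_const (A h p) (g (h.take (t₀ + m)))), pexp_const]
  -- initial bound
  have hZ0 : Z h₀ ≤ ENNReal.ofReal (Real.exp (-(lam * θ / 2))) := by
    rw [hZ]
    apply ENNReal.ofReal_le_ofReal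
    apply Real.exp_le_exp.mpr
    have : θ / 2 ≤ D h₀ := hinit
    nlinarith
  -- per-time Markov bound
  have markov : ∀ t, t₀ ≤ t → t ≤ T →
      (∑' h, if D (h.take t) < θ / 4 then μ (T - t₀) h else 0)
        ≤ ENNReal.ofReal (Real.exp (-(lam * θ / 4))) := by
    intro t h1t h2t
    have step1 : (∑' h, if D (h.take t) < θ / 4 then μ (T - t₀) h else 0)
        ≤ ∑' h, ENNReal.ofReal (Real.exp (lam * θ / 4)) * (μ (T - t₀) h * Z (h.take t)) := by
      apply ENNReal.tsum_le_tsum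
      intro h
      by_cases hE : D (h.take t) < θ / 4
      · rw [if_pos hE]
        have hone : (1:ℝ≥0∞) ≤ ENNReal.ofReal (Real.exp (lam * θ / 4)) * Z (h.take t) := by
          rw [hZ]
          rw [← ENNReal.ofReal_mul (Real.exp_pos _).le, ← Real.exp_add]
          rw [← ENNReal.ofReal_one]
          apply ENNReal.ofReal_le_ofReal
          rw [show (1:ℝ) = Real.exp 0 from (Real.exp_zero).symm]
          apply Real.exp_le_exp.mpr
          nlinarith
        calc μ (T - t₀) h = μ (T - t₀) h * 1 := (mul_one _).symm
          _ ≤ μ (T - t₀) h * (ENNReal.ofReal (Real.exp (lam * θ / 4)) * Z (h.take t)) :=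
              mul_le_mul_right hone _
          _ = ENNReal.ofReal (Real.exp (lam * θ / 4)) * (μ (T - t₀) h * Z (h.take t)) := by
              ring
      · rw [if_neg hE]; exact zero_le
    rw [ENNReal.tsum_mul_left] at step1
    have step2 : (∑' h, μ (T - t₀) h * Z (h.take t)) ≤ ENNReal.ofReal (Real.exp (-(lam * θ / 2))) := by
      have : (∑' h, μ (T - t₀) h * Z (h.take t)) = pexp (μ (t - t₀)) Z := by
        have ht' : t₀ + (t - t₀) = t := by omega
        have := proj Z (t - t₀) (T - t₀) (by omega)
        rw [ht'] at this
        exact this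
      rw [this]
      exact le_trans (mart _) hZ0
    calc (∑' h, if D (h.take t) < θ / 4 then μ (T - t₀) h else 0)
        ≤ ENNReal.ofReal (Real.exp (lam * θ / 4)) * ∑' h, μ (T - t₀) h * Z (h.take t) := step1
      _ ≤ ENNReal.ofReal (Real.exp (lam * θ / 4)) * ENNReal.ofReal (Real.exp (-(lam * θ / 2))) :=
          mul_le_mul_right step2 _
      _ = ENNReal.ofReal (Real.exp (lam * θ / 4) * Real.exp (-(lam * θ / 2))) :=
          (ENNReal.ofReal_mul (Real.exp_pos _).le).symm
      _ = ENNReal.ofReal (Real.exp (-(lam * θ / 4))) := by rw [← Real.exp_add]; ring_nf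
  -- union bound
  have union : (∑' h, if (fun h => D (h.take (τ h)) < θ / 4) h then μ (T - t₀) h else 0)
      ≤ (T : ℝ≥0∞) * ENNReal.ofReal (Real.exp (-(lam * θ / 4))) := by
    have pointwise : ∀ h, (if D (h.take (τ h)) < θ / 4 then μ (T - t₀) h else 0)
        ≤ ∑ t ∈ Finset.Ioc t₀ T, (if D (h.take t) < θ / 4 then μ (T - t₀) h else 0) := by
      intro h
      by_cases hE : D (h.take (τ h)) < θ / 4
      · rw [if_pos hE]
        by_cases h0 : μ (T - t₀) h = 0
        · rw [h0]; exact zero_le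
        · have hh : h ∈ (μ (T - t₀)).support := h0
          have hmem : τ h ∈ Finset.Ioc t₀ T := by
            rw [Finset.mem_Ioc]
            refine ⟨?_, (hτ h).2⟩
            rcases Nat.lt_or_ge t₀ (τ h) with hlt | hge
            · exact hlt
            · exfalso
              have : τ h = t₀ := le_antisymm hge (hτ h).1
              rw [this, (hsup _ h hh).2] at hE
              have := hinit
              simp only [hD] at hE
              linarith
          have := Finset.single_le_sum
            (f := fun t => if D (h.take t) < θ / 4 then μ (T - t₀) h else 0)
            (fun t _ => zero_le) hmem
          simp only [if_pos hE] at this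
          exact this
      · rw [if_neg hE]; exact zero_le
    calc (∑' h, if D (h.take (τ h)) < θ / 4 then μ (T - t₀) h else 0)
        ≤ ∑' h, ∑ t ∈ Finset.Ioc t₀ T, (if D (h.take t) < θ / 4 then μ (T - t₀) h else 0) :=
          ENNReal.tsum_le_tsum pointwise
      _ = ∑ t ∈ Finset.Ioc t₀ T, ∑' h, (if D (h.take t) < θ / 4 then μ (T - t₀) h else 0) :=
          Summable.tsum_finsetSum (fun t _ => ENNReal.summable)
      _ ≤ ∑ t ∈ Finset.Ioc t₀ T, ENNReal.ofReal (Real.exp (-(lam * θ / 4))) := by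
          apply Finset.sum_le_sum
          intro t ht
          rw [Finset.mem_Ioc] at ht
          exact markov t (le_of_lt ht.1) ht.2
      _ = (Finset.Ioc t₀ T).card * ENNReal.ofReal (Real.exp (-(lam * θ / 4))) := by
          rw [Finset.sum_const, nsmul_eq_mul]
      _ ≤ (T : ℝ≥0∞) * ENNReal.ofReal (Real.exp (-(lam * θ / 4))) := by
          apply mul_le_mul_left
          rw [Nat.card_Ioc]
          exact Nat.cast_le.mpr (Nat.sub_le _ _)
  -- conclude
  unfold prEvent
  have hfin : (T : ℝ≥0∞) * ENNReal.ofReal (Real.exp (-(lam * θ / 4))) ≠ ⊤ :=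
    ENNReal.mul_ne_top (ENNReal.natCast_ne_top T) ENNReal.ofReal_ne_top
  have := ENNReal.toReal_mono hfin union
  rw [ENNReal.toReal_mul, ENNReal.toReal_natCast, ENNReal.toReal_ofReal (Real.exp_pos _).le]
    at this
  exact this


/-- **non-negligible epochs stay uncovered.** Fix a real `k ≥ 1`, `θ > 0`, an
interval `I` of length `1/(3k)` with midpoint `p* ∈ [0,1]`, a time step `t₀` (with history `h₀`),
and a horizon `T`. Let `P⁺ = {p ∈ P ∩ I : Δ_p(t₀) ≥ 0}` and `Δ̂(t) = Σ_{p∈P⁺} Δ_p(t)`. Suppose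
`Δ̂(t₀) ≥ θ/2` and at every step `t > t₀` at which the forecaster predicts a value in `P⁺`, the
bit `b(t)` is drawn, conditionally on the history, from `Bernoulli(q_t)` with
`q_t ≥ p* + 1/(3k)`. Then for any adaptively chosen stopping time `T_act` with `t₀ ≤ T_act ≤ T`,
the probability that `Δ̂(T_act) < θ/4` is at most `T·exp(−θ/(12k))`. The symmetric statement
holds with `P⁻ = {p ∈ P ∩ I : Δ_p(t₀) < 0}`, `Δ̂(t) = Σ_{p∈P⁻} (−Δ_p(t))`, and
`q_t ≤ p* − 1/(3k)`. -/
theorem uncovered_epoch (k θ : ℝ) (hk : 1 ≤ k) (hθ : 0 < θ)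
    (pstar : ℝ) (hps : pstar ∈ Set.Icc (0 : ℝ) 1)
    (T t₀ : ℕ) (ht₀ : t₀ ≤ T)
    (P : Finset ℝ) (h₀ : Transcript) (hlen : h₀.length = t₀) :
    (∀ Pplus : Finset ℝ,
      Pplus = P.filter (fun p =>
          p ∈ Set.Ioo (pstar - 1 / (6 * k)) (pstar + 1 / (6 * k)) ∧ 0 ≤ bias h₀ p) →
      θ / 2 ≤ ∑ p ∈ Pplus, bias h₀ p →
      ∀ F : Transcript → PMF ℝ, (∀ h, (F h).support ⊆ (P : Set ℝ)) →
      ∀ A : Transcript → ℝ → PMF Bool,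
        (∀ (h : Transcript) (p : ℝ), t₀ ≤ h.length → p ∈ Pplus →
          ∃ q : ℝ, pstar + 1 / (3 * k) ≤ q ∧ q ≤ 1 ∧ A h p = bern q) →
      ∀ τ : Transcript → ℕ,
        (∀ h, t₀ ≤ τ h ∧ τ h ≤ T) →
        (∀ h h', h.take (τ h) = h'.take (τ h) → τ h' = τ h) →
      prEvent (playFromP F A h₀ (T - t₀))
          (fun h => ∑ p ∈ Pplus, bias (h.take (τ h)) p < θ / 4)
        ≤ T * Real.exp (-(θ / (12 * k)))) ∧
    (∀ Pminus : Finset ℝ,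
      Pminus = P.filter (fun p =>
          p ∈ Set.Ioo (pstar - 1 / (6 * k)) (pstar + 1 / (6 * k)) ∧ bias h₀ p < 0) →
      θ / 2 ≤ ∑ p ∈ Pminus, -bias h₀ p →
      ∀ F : Transcript → PMF ℝ, (∀ h, (F h).support ⊆ (P : Set ℝ)) →
      ∀ A : Transcript → ℝ → PMF Bool,
        (∀ (h : Transcript) (p : ℝ), t₀ ≤ h.length → p ∈ Pminus →
          ∃ q : ℝ, 0 ≤ q ∧ q ≤ pstar - 1 / (3 * k) ∧ A h p = bern q) →
      ∀ τ : Transcript → ℕ,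
        (∀ h, t₀ ≤ τ h ∧ τ h ≤ T) →
        (∀ h h', h.take (τ h) = h'.take (τ h) → τ h' = τ h) →
      prEvent (playFromP F A h₀ (T - t₀))
          (fun h => ∑ p ∈ Pminus, -bias (h.take (τ h)) p < θ / 4)
        ≤ T * Real.exp (-(θ / (12 * k)))) := by
  have hk0 : (0:ℝ) < k := lt_of_lt_of_le one_pos hk
  set lam : ℝ := 1 / (3 * k) with hlamdef
  have hlam : 0 < lam := by positivity
  have hlam2 : lam ≤ 2 := by
    rw [hlamdef, div_le_iff₀ (by positivity)]
    nlinarith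
  have hhalf : lam / 2 = 1 / (6 * k) := by
    rw [hlamdef]; field_simp; ring
  have hsum : 1 / (6 * k) + 1 / (6 * k) = 1 / (3 * k) := by
    field_simp; ring
  have hexp : -(θ / (12 * k)) = -(lam * θ / 4) := by
    rw [hlamdef]; field_simp; norm_num
  constructor
  · -- positive branch
    intro Pplus hPdef hinit F _hF A hA τ hτ _hτmeas
    have hAmain : ∀ (h : Transcript) (p : ℝ), t₀ ≤ h.length → p ∈ Pplus →
        ∃ q : ℝ, 0 ≤ q ∧ q ≤ 1 ∧ A h p = bern q ∧
          q * Real.exp (-(lam * ((1:ℝ) * ((1:ℝ) - p)))) +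
            (1 - q) * Real.exp (-(lam * ((1:ℝ) * ((0:ℝ) - p)))) ≤ 1 := by
      intro h p hl hp
      obtain ⟨q, hq1, hq2, hq3⟩ := hA h p hl hp
      rw [hPdef, Finset.mem_filter] at hp
      obtain ⟨hpP, hIoo, _⟩ := hp
      have h3k : (0:ℝ) < 1 / (3 * k) := by positivity
      refine ⟨q, by linarith [hps.1], hq2, hq3, ?_⟩
      have hpq : p + lam / 2 ≤ q := by
        rw [hhalf]
        have := hIoo.2
        linarith
      have hp1 : p ≤ 1 - lam / 2 := by
        rw [hhalf]
        have := hIoo.2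
        linarith
      have step := step_scalar hlam hlam2 (by linarith [hps.1]) hpq hp1
      have e1 : -(lam * ((1:ℝ) * ((1:ℝ) - p))) = -(lam * ((1:ℝ) - p)) := by ring
      have e2 : -(lam * ((1:ℝ) * ((0:ℝ) - p))) = lam * p := by ring
      rw [e1, e2]
      exact step
    have key := main_bound lam θ hθ hlam t₀ T ht₀ h₀ hlen Pplus 1
      (by simpa using hinit) F A hAmain τ hτ
    have e3 : (fun h : Transcript => ∑ p ∈ Pplus, bias (h.take (τ h)) p < θ / 4)
        = (fun h : Transcript => ∑ p ∈ Pplus, (1:ℝ) * bias (h.take (τ h)) p < θ / 4) := by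
      funext h; simp
    rw [e3, hexp]
    exact key
  · -- negative branch
    intro Pminus hPdef hinit F _hF A hA τ hτ _hτmeas
    have hAmain : ∀ (h : Transcript) (p : ℝ), t₀ ≤ h.length → p ∈ Pminus →
        ∃ q : ℝ, 0 ≤ q ∧ q ≤ 1 ∧ A h p = bern q ∧
          q * Real.exp (-(lam * ((-1:ℝ) * ((1:ℝ) - p)))) +
            (1 - q) * Real.exp (-(lam * ((-1:ℝ) * ((0:ℝ) - p)))) ≤ 1 := by
      intro h p hl hp
      obtain ⟨q, hq1, hq2, hq3⟩ := hA h p hl hp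
      rw [hPdef, Finset.mem_filter] at hp
      obtain ⟨hpP, hIoo, _⟩ := hp
      have h3k : (0:ℝ) < 1 / (3 * k) := by positivity
      have h6k : (0:ℝ) < 1 / (6 * k) := by positivity
      refine ⟨q, hq1, by linarith [hps.2], hq3, ?_⟩
      have hpq : (1 - p) + lam / 2 ≤ 1 - q := by
        rw [hhalf]
        have := hIoo.1
        linarith
      have hp1 : (1 - p) ≤ 1 - lam / 2 := by
        rw [hhalf]
        have := hIoo.1
        linarith
      have step := step_scalar hlam hlam2 (by linarith [hps.2] : (0:ℝ) ≤ 1 - q) hpq hp1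
      have e1 : Real.exp (-(lam * ((1:ℝ) - (1 - p)))) = Real.exp (-(lam * p)) :=
        congrArg Real.exp (by ring)
      have e2 : (1:ℝ) - (1 - q) = q := by ring
      rw [e1, e2] at step
      have e3 : -(lam * ((-1:ℝ) * ((1:ℝ) - p))) = lam * (1 - p) := by ring
      have e4 : -(lam * ((-1:ℝ) * ((0:ℝ) - p))) = -(lam * p) := by ring
      rw [e3, e4]
      linarith
    have hinit' : θ / 2 ≤ ∑ p ∈ Pminus, (-1:ℝ) * bias h₀ p := by
      simp only [neg_one_mul]
      exact hinit
    have key := main_bound lam θ hθ hlam t₀ T ht₀ h₀ hlen Pminus (-1)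
      hinit' F A hAmain τ hτ
    have e5 : (fun h : Transcript => ∑ p ∈ Pminus, -bias (h.take (τ h)) p < θ / 4)
        = (fun h : Transcript => ∑ p ∈ Pminus, (-1:ℝ) * bias (h.take (τ h)) p < θ / 4) := by
      funext h; simp [neg_one_mul]
    rw [e5, hexp]
    exact key
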